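/- In a unital Banach algebra, the directional derivative of the exponential map at a in direction b equals ∫₀¹ e^{(1-t)a} b e^{ta} dt, i.e. lim_{s→0} (e^{a+sb} - e^a)/s = ∫₀¹ e^{(1-t)a} b e^{ta} dt. -/

import Mathlib

/-! Duhamel's formula: `t ↦ exp ((1 - t) • a) * exp (t • c)` runs from `exp a` to `exp c` with
derivative `exp ((1 - t) • a) * (c - a) * exp (t • c)`. For `c = a + s • b` this makes the difference
quotient equal to `∫ t in 0..1, exp ((1 - t) • a) * b * exp (t • (a + s • b))`, which is continuous
in `s`. -/

open NormedSpace Filter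

/-- `exp_continuous` needs a `NormedAlgebra ℚ A` instance, which an `ℝ`-algebra does not provide. -/
theorem continuous_exp_of_normedAlgebra (𝕂 : Type*) {A : Type*} [NontriviallyNormedField 𝕂]
    [CharZero 𝕂] [ContinuousSMul ℚ 𝕂] [NormedRing A] [NormedAlgebra 𝕂 A] [CompleteSpace A] :
    Continuous (exp : A → A) :=
  continuous_iff_continuousAt.2 fun x => (exp_analytic (𝕂 := 𝕂) x).continuousAt

section RealBanachAlgebra

variable {A : Type*} [NormedRing A] [NormedAlgebra ℝ A] [CompleteSpace A]

theorem hasDerivAt_exp_one_sub_smul_mul_exp_smul (a c : A) (t : ℝ) :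
    HasDerivAt (fun t : ℝ => exp ((1 - t) • a) * exp (t • c))
      (exp ((1 - t) • a) * (c - a) * exp (t • c)) t := by
  have hleft : HasDerivAt (fun t : ℝ => exp ((1 - t) • a)) (-(exp ((1 - t) • a) * a)) t := by
    simpa [Function.comp_def] using
      (hasDerivAt_exp_smul_const a (1 - t)).scomp t ((hasDerivAt_id t).const_sub 1)
  exact (hleft.mul (hasDerivAt_exp_smul_const' c t)).congr_deriv (by noncomm_ring)

theorem exp_sub_exp_eq_integral (a c : A) :
    exp c - exp a = ∫ t in (0 : ℝ)..1, exp ((1 - t) • a) * (c - a) * exp (t • c) := by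
  have hexp := continuous_exp_of_normedAlgebra ℝ (A := A)
  have hcont : Continuous fun t : ℝ => exp ((1 - t) • a) * (c - a) * exp (t • c) := by fun_prop
  rw [intervalIntegral.integral_eq_sub_of_hasDerivAt
    (fun t _ => hasDerivAt_exp_one_sub_smul_mul_exp_smul a c t) (hcont.intervalIntegrable 0 1)]
  simp

theorem continuous_integral_exp_mul_exp_add_smul (a b : A) :
    Continuous fun s : ℝ => ∫ t in (0 : ℝ)..1, exp ((1 - t) • a) * b * exp (t • (a + s • b)) := by
  have hexp := continuous_exp_of_normedAlgebra ℝ (A := A)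
  exact intervalIntegral.continuous_parametric_intervalIntegral_of_continuous' (by fun_prop) 0 1

end RealBanachAlgebra

theorem dexp_eq_integral
    {A : Type*} [NormedRing A] [NormedAlgebra ℝ A] [CompleteSpace A] (a b : A) :
    Tendsto (fun s : ℝ => s⁻¹ • (exp (a + s • b) - exp a)) (nhdsWithin 0 {(0 : ℝ)}ᶜ)
      (nhds (∫ t in (0 : ℝ)..1, exp ((1 - t) • a) * b * exp (t • a))) := by
  have hlim := ((continuous_integral_exp_mul_exp_add_smul a b).tendsto 0).mono_left
    (nhdsWithin_le_nhds (s := {(0 : ℝ)}ᶜ))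
  simp only [zero_smul, add_zero] at hlim
  refine hlim.congr' ?_
  filter_upwards [self_mem_nhdsWithin] with s (hs : s ≠ 0)
  rw [exp_sub_exp_eq_integral, add_sub_cancel_left]
  simp only [mul_smul_comm, smul_mul_assoc, intervalIntegral.integral_smul, inv_smul_smul₀ hs]
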